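/- If y ∈ [0, 2/3] is a dyadic rational (y = k/2^n for some integers k, n ≥ 0), then the level set L(y) is countable. -/

import Mathlib

open Set MeasureTheory ENNReal

/-- `phi x` is the distance from `x` to the nearest integer. -/
noncomputable def phi (x : ℝ) : ℝ := |x - (round x : ℤ)|

/-- The Takagi function. -/
noncomputable def T (x : ℝ) : ℝ := ∑' n : ℕ, phi (2 ^ n * x) / 2 ^ n

/-- The `n`-th binary digit of `x` (terminating expansion for dyadic rationals). -/
noncomputable def eps (n : ℕ) (x : ℝ) : ℤ := ⌊2 ^ n * x⌋ - 2 * ⌊2 ^ (n - 1) * x⌋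

/-- `D k x = ∑_{j=1}^k (-1)^{ε_j(x)}`, the excess of 0 digits over 1 digits. -/
noncomputable def D (k : ℕ) (x : ℝ) : ℤ := ∑ j ∈ Finset.Icc 1 k, (1 - 2 * eps j x)

/-- The level set of the Takagi function at level `y`. -/
def L (y : ℝ) : Set ℝ := {x | x ∈ Set.Icc (0:ℝ) 1 ∧ T x = y}

/-- `x` is a balanced dyadic rational of order `m`. -/
def BalancedOfOrder (x : ℝ) (m : ℕ) : Prop :=
  x ∈ Set.Ico (0:ℝ) 1 ∧ (∃ k : ℤ, x = (k : ℝ) / 2 ^ (2 * m)) ∧ D (2 * m) x = 0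

/-- The generation of a balanced dyadic rational of order `m`:
the number of indices `1 ≤ j ≤ 2m` with `D j x = 0`. -/
noncomputable def generation (x : ℝ) (m : ℕ) : ℕ :=
  ((Finset.Icc 1 (2 * m)).filter (fun j => D j x = 0)).card

/-- A balanced dyadic rational of order `m` is leading if `D j x ≥ 0` for all `1 ≤ j ≤ 2m`. -/
def Leading (x : ℝ) (m : ℕ) : Prop := ∀ j ∈ Finset.Icc 1 (2 * m), 0 ≤ D j x

/-- The equivalence relation whose classes are the local level sets. -/
def locSetoid : Setoid ℝ where
  r x x' := ∀ n : ℕ, 1 ≤ n → |D n x| = |D n x'|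
  iseqv := ⟨fun _ _ _ => rfl, fun h n hn => (h n hn).symm,
    fun h g n hn => (h n hn).trans (g n hn)⟩

/-- The set of local level sets contained in `L y`: the image of `L y ∩ [0,1)`
under the quotient map of `locSetoid`. -/
def locClasses (y : ℝ) : Set (Quotient locSetoid) :=
  Quotient.mk locSetoid '' (L y ∩ Set.Ico (0:ℝ) 1)

/-!
Write `η n = fract (2 ^ n * x)`. The self-similarity `T x = phi x + T (2 * x) / 2` shows that
`c n = T (η n) + D n x * η n` satisfies `c 0 = T x` and `c (n + 1) = 2 * c n - ε (D n x + 1)`,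
where `ε = eps (n + 1) x` is the next binary digit. If `2 ^ N * T x` is an integer, so is `c n` for
all `n ≥ N`, and `0 ≤ T (η n) < 1` then confines the integer pair `(D n x, c n)` to a small window.
A case check shows that whenever both digits are allowed at a step after `N`, one of them leads to
`c = 0 ≤ D`, which forces `η = 0`: the corresponding point is a dyadic rational. So a non-dyadic
point of the level set is determined by its first `N` binary digits (and its integer part), and
the level set is countable.
-/

lemma phi_eq_min_fract (x : ℝ) : phi x = min (Int.fract x) (1 - Int.fract x) :=
  abs_sub_round_eq_min x

lemma phi_nonneg (x : ℝ) : 0 ≤ phi x := abs_nonneg _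

lemma phi_add_intCast (x : ℝ) (k : ℤ) : phi (x + k) = phi x := by
  simp only [phi_eq_min_fract, Int.fract_add_intCast]

lemma phi_of_mem_Ico {x : ℝ} (h0 : 0 ≤ x) (h1 : x < 1) : phi x = min x (1 - x) := by
  rw [phi_eq_min_fract, Int.fract_eq_self.2 ⟨h0, h1⟩]

lemma phi_two_mul_le (x : ℝ) : phi (2 * x) ≤ 1 - 2 * phi x := by
  have h0 := Int.fract_nonneg x
  have h1 := Int.fract_lt_one x
  have h2x : 2 * x = 2 * Int.fract x + ((2 * ⌊x⌋ : ℤ) : ℝ) := by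
    rw [← Int.self_sub_floor]; push_cast; ring
  rw [h2x, phi_add_intCast, phi_eq_min_fract x]
  rcases lt_or_ge (Int.fract x) (1 / 2) with h | h
  · rw [phi_of_mem_Ico (by linarith) (by linarith)]
    grind
  · rw [show 2 * Int.fract x = (2 * Int.fract x - 1) + ((1 : ℤ) : ℝ) by push_cast; ring,
      phi_add_intCast, phi_of_mem_Ico (by linarith) (by linarith)]
    grind

lemma summable_takagi_terms (x : ℝ) : Summable fun n : ℕ => phi (2 ^ n * x) / 2 ^ n :=
  (summable_geometric_two' 1).of_nonneg_of_le (fun n => div_nonneg (phi_nonneg _) (by positivity))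
    fun n => div_le_div_of_nonneg_right (abs_sub_round _) (by positivity)

lemma T_nonneg (x : ℝ) : 0 ≤ T x :=
  tsum_nonneg fun n => div_nonneg (phi_nonneg _) (by positivity)

lemma T_le_one (x : ℝ) : T x ≤ 1 :=
  calc T x ≤ ∑' n : ℕ, (1 : ℝ) / 2 / 2 ^ n :=
        (summable_takagi_terms x).tsum_le_tsum
          (fun n => div_le_div_of_nonneg_right (abs_sub_round _) (by positivity))
          (summable_geometric_two' 1)
    _ = 1 := tsum_geometric_two' 1

lemma T_eq_phi_add (x : ℝ) : T x = phi x + T (2 * x) / 2 := by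
  rw [T, (summable_takagi_terms x).tsum_eq_zero_add, T, ← tsum_div_const]
  congr 1
  · simp
  · exact tsum_congr fun n => by
      rw [pow_succ, mul_comm _ (2 : ℝ), mul_assoc, mul_left_comm, ← div_div, div_right_comm]

lemma phi_le_T (x : ℝ) : phi x ≤ T x := by
  linarith [T_eq_phi_add x, T_nonneg (2 * x)]

lemma T_add_intCast (x : ℝ) (k : ℤ) : T (x + k) = T x :=
  tsum_congr fun n => by
    rw [show (2 : ℝ) ^ n * (x + k) = 2 ^ n * x + ((2 ^ n * k : ℤ) : ℝ) by push_cast; ring,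
      phi_add_intCast]

lemma T_fract (x : ℝ) : T (Int.fract x) = T x := by
  rw [Int.fract, sub_eq_add_neg, ← Int.cast_neg, T_add_intCast]

lemma T_le_three_quarters (x : ℝ) : T x ≤ 3 / 4 := by
  linarith [T_eq_phi_add x, T_eq_phi_add (2 * x), T_le_one (2 * (2 * x)), phi_two_mul_le x,
    phi_nonneg x]

lemma fract_two_pow_succ_mul (n : ℕ) (x : ℝ) :
    Int.fract (2 ^ (n + 1) * x) = 2 * Int.fract (2 ^ n * x) - eps (n + 1) x := by
  simp only [Int.fract, eps, Nat.add_sub_cancel]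
  push_cast
  ring

lemma eps_succ_eq_zero_or_one (n : ℕ) (x : ℝ) : eps (n + 1) x = 0 ∨ eps (n + 1) x = 1 := by
  have h := fract_two_pow_succ_mul n x
  have h₀ := Int.fract_nonneg (2 ^ n * x)
  have h₁ := Int.fract_lt_one (2 ^ n * x)
  have h₀' := Int.fract_nonneg (2 ^ (n + 1) * x)
  have h₁' := Int.fract_lt_one (2 ^ (n + 1) * x)
  have hlo : (-1 : ℝ) < eps (n + 1) x := by linarith
  have hhi : (eps (n + 1) x : ℝ) < 2 := by linarith
  have : -1 < eps (n + 1) x := by exact_mod_cast hlo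
  have : eps (n + 1) x < 2 := by exact_mod_cast hhi
  omega

lemma D_succ (n : ℕ) (x : ℝ) : D (n + 1) x = D n x + (1 - 2 * eps (n + 1) x) :=
  Finset.sum_Icc_succ_top (by omega) _

/-- For `x ∈ [k / 2 ^ n, (k + 1) / 2 ^ n]` one has `T x = T (k / 2 ^ n) + localTakagi n x / 2 ^ n`:
the first `n` terms of `T` are affine there, with total slope `D n x`. -/
noncomputable def localTakagi (n : ℕ) (x : ℝ) : ℝ :=
  T (Int.fract (2 ^ n * x)) + D n x * Int.fract (2 ^ n * x)

lemma localTakagi_zero (x : ℝ) : localTakagi 0 x = T x := by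
  simp [localTakagi, D, T_fract]

lemma localTakagi_succ (n : ℕ) (x : ℝ) :
    localTakagi (n + 1) x = 2 * localTakagi n x - eps (n + 1) x * (D n x + 1) := by
  have hη := fract_two_pow_succ_mul n x
  set η := Int.fract (2 ^ n * x)
  have h₀ : 0 ≤ η := Int.fract_nonneg _
  have h₁ : η < 1 := Int.fract_lt_one _
  have h₀' := Int.fract_nonneg (2 ^ (n + 1) * x)
  have h₁' := Int.fract_lt_one (2 ^ (n + 1) * x)
  have hT : T (Int.fract (2 ^ (n + 1) * x)) = 2 * T η - 2 * phi η := by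
    rw [hη, sub_eq_add_neg, ← Int.cast_neg, T_add_intCast, T_eq_phi_add η]
    ring
  rw [localTakagi, localTakagi, hT, D_succ, hη]
  rcases eps_succ_eq_zero_or_one n x with he | he <;> rw [he] at hη ⊢ <;>
    rw [phi_of_mem_Ico h₀ h₁] <;> push_cast at hη ⊢
  · rw [min_eq_left (by linarith)]; ring
  · rw [min_eq_right (by linarith)]; ring

lemma exists_localTakagi_eq_two_pow_mul_sub (n : ℕ) (x : ℝ) :
    ∃ m : ℤ, localTakagi n x = 2 ^ n * T x - m := by
  induction n with
  | zero => exact ⟨0, by simp [localTakagi_zero]⟩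
  | succ n ih =>
    obtain ⟨m, hm⟩ := ih
    exact ⟨2 * m + eps (n + 1) x * (D n x + 1), by rw [localTakagi_succ, hm]; push_cast; ring⟩

lemma exists_localTakagi_eq_intCast {N n : ℕ} {x : ℝ} {K : ℤ} (hK : 2 ^ N * T x = K)
    (hn : N ≤ n) : ∃ C : ℤ, localTakagi n x = C := by
  obtain ⟨m, hm⟩ := exists_localTakagi_eq_two_pow_mul_sub n x
  refine ⟨2 ^ (n - N) * K - m, ?_⟩
  rw [hm]
  push_cast
  rw [← hK, ← mul_assoc, ← pow_add, Nat.sub_add_cancel hn]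

/-- Exactly the integer pairs with `S * η ≤ C < S * η + 1` for some `η ∈ [0, 1)`; for
`(S, C) = (D n x, localTakagi n x)` and `η = fract (2 ^ n * x)` this is `0 ≤ T η < 1`. -/
def IsAdmissible (S C : ℤ) : Prop := min 0 (S + 1) ≤ C ∧ C ≤ max 0 S

lemma isAdmissible_of_mul_le {S C : ℤ} {η : ℝ} (h₀ : 0 ≤ η) (h₁ : η < 1)
    (hlo : S * η ≤ C) (hhi : (C : ℝ) < S * η + 1) : IsAdmissible S C := by
  unfold IsAdmissible
  rcases le_or_gt 0 S with hS | hS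
  · have hS' : (0 : ℝ) ≤ S := by exact_mod_cast hS
    have hC₀ : 0 ≤ C := by exact_mod_cast (show (0 : ℝ) ≤ C by nlinarith)
    have hC₁ : C < S + 1 := by exact_mod_cast (show (C : ℝ) < S + 1 by nlinarith)
    omega
  · have hS' : (S : ℝ) < 0 := by exact_mod_cast hS
    have hC₀ : S < C := by exact_mod_cast (show (S : ℝ) < C by nlinarith)
    have hC₁ : C < 1 := by exact_mod_cast (show (C : ℝ) < 1 by nlinarith)
    omega

lemma isAdmissible_localTakagi {n : ℕ} {x : ℝ} {C : ℤ} (hC : localTakagi n x = C) :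
    IsAdmissible (D n x) C := by
  have hT : T (Int.fract (2 ^ n * x)) = C - D n x * Int.fract (2 ^ n * x) := by
    rw [← hC, localTakagi]; ring
  exact isAdmissible_of_mul_le (Int.fract_nonneg _) (Int.fract_lt_one _)
    (by linarith [T_nonneg (Int.fract (2 ^ n * x))])
    (by linarith [T_le_three_quarters (Int.fract (2 ^ n * x))])

lemma localTakagi_succ_eq_intCast {n : ℕ} {x : ℝ} {C : ℤ} (hC : localTakagi n x = C) :
    localTakagi (n + 1) x = ((2 * C - eps (n + 1) x * (D n x + 1) : ℤ) : ℝ) := by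
  rw [localTakagi_succ, hC]
  push_cast
  ring

lemma isAdmissible_succ {n : ℕ} {x : ℝ} {C : ℤ} (hC : localTakagi n x = C) :
    IsAdmissible (D n x + (1 - 2 * eps (n + 1) x)) (2 * C - eps (n + 1) x * (D n x + 1)) := by
  rw [← D_succ]
  exact isAdmissible_localTakagi (localTakagi_succ_eq_intCast hC)

/-- `(S + (1 - 2 * e), 2 * C - e * (S + 1))` is the state `(D, localTakagi)` reached from `(S, C)`
through the binary digit `e`; the state `(S, 0)` with `S ≥ 0` forces `fract (2 ^ n * x) = 0`. -/
lemma exit_of_isAdmissible_children {S C e e' : ℤ} (he : e = 0 ∨ e = 1) (he' : e' = 0 ∨ e' = 1)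
    (hne : e ≠ e') (h : IsAdmissible (S + (1 - 2 * e)) (2 * C - e * (S + 1)))
    (h' : IsAdmissible (S + (1 - 2 * e')) (2 * C - e' * (S + 1))) :
    (2 * C - e * (S + 1) = 0 ∧ 0 ≤ S + (1 - 2 * e)) ∨
      (2 * C - e' * (S + 1) = 0 ∧ 0 ≤ S + (1 - 2 * e')) := by
  unfold IsAdmissible at h h'
  rcases he with rfl | rfl <;> rcases he' with rfl | rfl <;> simp only [zero_mul, one_mul] at * <;>
    omega

lemma fract_eq_zero_of_localTakagi_eq_zero {n : ℕ} {x : ℝ} (h : localTakagi n x = 0)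
    (hD : 0 ≤ D n x) : Int.fract (2 ^ n * x) = 0 := by
  set η := Int.fract (2 ^ n * x)
  have h₀ : 0 ≤ η := Int.fract_nonneg _
  have h₁ : η < 1 := Int.fract_lt_one _
  have hD' : (0 : ℝ) ≤ D n x := by exact_mod_cast hD
  have hphi : phi η ≤ 0 := by
    linarith [phi_le_T η, mul_nonneg hD' h₀, show T η + D n x * η = 0 from h]
  rw [phi_of_mem_Ico h₀ h₁] at hphi
  rcases min_le_iff.1 hphi with hη | hη <;> linarith

lemma eps_eq_of_floor_eq {x x' : ℝ} {n : ℕ}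
    (h : ∀ j ≤ n, ⌊(2 : ℝ) ^ j * x⌋ = ⌊(2 : ℝ) ^ j * x'⌋) {j : ℕ} (hj : j ≤ n) :
    eps j x = eps j x' := by
  rw [eps, eps, h j hj, h (j - 1) (by omega)]

lemma D_eq_of_floor_eq {x x' : ℝ} {n : ℕ}
    (h : ∀ j ≤ n, ⌊(2 : ℝ) ^ j * x⌋ = ⌊(2 : ℝ) ^ j * x'⌋) : D n x = D n x' :=
  Finset.sum_congr rfl fun j hj => by
    rw [eps_eq_of_floor_eq h (Finset.mem_Icc.1 hj).2]

lemma localTakagi_eq_of_floor_eq {x x' : ℝ} (hT : T x = T x') {n : ℕ}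
    (h : ∀ j ≤ n, ⌊(2 : ℝ) ^ j * x⌋ = ⌊(2 : ℝ) ^ j * x'⌋) :
    localTakagi n x = localTakagi n x' := by
  induction n with
  | zero => rw [localTakagi_zero, localTakagi_zero, hT]
  | succ n ih =>
    have h' : ∀ j ≤ n, ⌊(2 : ℝ) ^ j * x⌋ = ⌊(2 : ℝ) ^ j * x'⌋ := fun j hj => h j (by omega)
    rw [localTakagi_succ, localTakagi_succ, ih h', D_eq_of_floor_eq h', eps_eq_of_floor_eq h le_rfl]

lemma fract_eq_zero_or_of_first_floor_ne {x x' : ℝ} {N m : ℕ} {K : ℤ} (hK : 2 ^ N * T x = K)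
    (hT : T x = T x') (hm : N ≤ m) (hagree : ∀ j ≤ m, ⌊(2 : ℝ) ^ j * x⌋ = ⌊(2 : ℝ) ^ j * x'⌋)
    (hne : ⌊(2 : ℝ) ^ (m + 1) * x⌋ ≠ ⌊(2 : ℝ) ^ (m + 1) * x'⌋) :
    Int.fract (2 ^ (m + 1) * x) = 0 ∨ Int.fract (2 ^ (m + 1) * x') = 0 := by
  obtain ⟨C, hC⟩ := exists_localTakagi_eq_intCast hK hm
  have hC' : localTakagi m x' = C := (localTakagi_eq_of_floor_eq hT hagree) ▸ hC
  have hD : D m x' = D m x := (D_eq_of_floor_eq hagree).symm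
  have heps : eps (m + 1) x ≠ eps (m + 1) x' := by
    rw [eps, eps, Nat.add_sub_cancel, hagree m le_rfl]
    omega
  have hadm' := isAdmissible_succ hC'
  rw [hD] at hadm'
  rcases exit_of_isAdmissible_children (eps_succ_eq_zero_or_one m x)
    (eps_succ_eq_zero_or_one m x') heps (isAdmissible_succ hC) hadm' with ⟨h0, hS⟩ | ⟨h0, hS⟩
  · exact .inl (fract_eq_zero_of_localTakagi_eq_zero
      (by rw [localTakagi_succ_eq_intCast hC, h0, Int.cast_zero]) (by rwa [D_succ]))
  · exact .inr (fract_eq_zero_of_localTakagi_eq_zero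
      (by rw [localTakagi_succ_eq_intCast hC', hD, h0, Int.cast_zero]) (by rwa [D_succ, hD]))

lemma exists_floor_two_pow_mul_ne {x x' : ℝ} (h : x ≠ x') :
    ∃ j : ℕ, ⌊(2 : ℝ) ^ j * x⌋ ≠ ⌊(2 : ℝ) ^ j * x'⌋ := by
  by_contra! hfloor
  obtain ⟨j, hj⟩ := pow_unbounded_of_one_lt |x - x'|⁻¹ (one_lt_two : (1 : ℝ) < 2)
  have hlt := Int.abs_sub_lt_one_of_floor_eq_floor (hfloor j)
  rw [← mul_sub, abs_mul, abs_of_pos (by positivity : (0 : ℝ) < 2 ^ j)] at hlt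
  rw [inv_lt_iff_one_lt_mul₀ (abs_pos.2 (sub_ne_zero.2 h))] at hj
  linarith [mul_comm |x - x'| (2 ^ j : ℝ)]

lemma countable_setOf_exists_fract_two_pow_mul_eq_zero :
    {x : ℝ | ∃ n : ℕ, Int.fract (2 ^ n * x) = 0}.Countable := by
  refine (countable_iUnion fun n : ℕ => countable_range fun k : ℤ => (k : ℝ) / 2 ^ n).mono ?_
  rintro x ⟨n, hn⟩
  obtain ⟨k, hk⟩ := Int.fract_eq_zero_iff.1 hn
  exact mem_iUnion.2 ⟨n, k, show (k : ℝ) / 2 ^ n = x by rw [hk]; field_simp⟩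

lemma injOn_floor_two_pow_mul {y : ℝ} {N : ℕ} {K : ℤ} (hK : 2 ^ N * y = K) :
    InjOn (fun x (j : Fin (N + 1)) => ⌊(2 : ℝ) ^ (j : ℕ) * x⌋)
      (T ⁻¹' {y} \ {x | ∃ n : ℕ, Int.fract (2 ^ n * x) = 0}) := by
  classical
  rintro x ⟨hx, hxd⟩ x' ⟨hx', hxd'⟩ hfloor
  by_contra hne
  have hex := exists_floor_two_pow_mul_ne hne
  have hN : N < Nat.find hex := by
    by_contra! hle
    exact Nat.find_spec hex (congrFun hfloor ⟨_, Nat.lt_succ_of_le hle⟩)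
  obtain ⟨m, hm⟩ : ∃ m, Nat.find hex = m + 1 := ⟨Nat.find hex - 1, by omega⟩
  have hagree : ∀ j ≤ m, ⌊(2 : ℝ) ^ j * x⌋ = ⌊(2 : ℝ) ^ j * x'⌋ :=
    fun j hj => not_not.1 (Nat.find_min hex (by omega))
  rcases fract_eq_zero_or_of_first_floor_ne (hx.symm ▸ hK) (hx.trans hx'.symm) (by omega) hagree
    (hm ▸ Nat.find_spec hex) with h | h
  exacts [hxd ⟨_, h⟩, hxd' ⟨_, h⟩]

lemma countable_T_preimage_singleton {y : ℝ} {N : ℕ} {K : ℤ} (hK : 2 ^ N * y = K) :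
    (T ⁻¹' {y}).Countable := by
  refine (countable_setOf_exists_fract_two_pow_mul_eq_zero.union
    ((mapsTo_univ _ _).countable_of_injOn (injOn_floor_two_pow_mul hK) countable_univ)).mono
    (sdiff_subset_iff.1 subset_rfl)

theorem stmt14_general (y : ℝ)
    (hdyadic : ∃ (k : ℤ) (n : ℕ), y = (k : ℝ) / 2 ^ n) :
    (L y).Countable := by
  obtain ⟨K, N, rfl⟩ := hdyadic
  exact (countable_T_preimage_singleton (by field_simp)).mono fun x hx => hx.2

theorem stmt14 (y : ℝ) (hy : y ∈ Set.Icc (0:ℝ) (2/3))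
    (hdyadic : ∃ (k : ℤ) (n : ℕ), y = (k : ℝ) / 2 ^ n) :
    (L y).Countable :=
  stmt14_general y hdyadic
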